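/- Let 0 ≤ r₁ < r₂ be real numbers and let (g_i)_{i∈ℕ} be a sequence of measurable functions g_i : ℝ → [0, ∞]. Then there exists ρ ∈ [r₁, r₂] such that (r₂ − r₁) · liminf_{i→∞} g_i(ρ) ≤ 2 · liminf_{i→∞} ∫_{[r₁,r₂]} g_i(t) dt, where the integral is the Lebesgue integral with values in [0, ∞] and the liminfs are taken in [0, ∞]. -/

import Mathlib

open MeasureTheory Filter
open scoped ENNReal Topology

/-! A function cannot exceed its average everywhere on a set of positive finite measure, and by
Fatou's lemma the average of `liminf gᵢ` is at most the `liminf` of the averages of the `gᵢ`.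
This even gives the estimate without the factor `2`. -/

namespace MeasureTheory

variable {α : Type*} [MeasurableSpace α] {μ : Measure α} {s : Set α}

theorem exists_mem_measure_mul_le_setLIntegral {f : α → ℝ≥0∞} (hμ : μ s ≠ 0) (hμ₁ : μ s ≠ ∞)
    (hf : AEMeasurable f (μ.restrict s)) : ∃ x ∈ s, μ s * f x ≤ ∫⁻ a in s, f a ∂μ := by
  obtain ⟨x, hxs, hx⟩ := exists_le_setLAverage hμ hμ₁ hf
  refine ⟨x, hxs, ?_⟩
  calc μ s * f x ≤ μ s * ((∫⁻ a in s, f a ∂μ) / μ s) := by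
        rw [← setLAverage_eq]; gcongr
    _ ≤ ∫⁻ a in s, f a ∂μ := ENNReal.mul_div_le

theorem exists_mem_measure_mul_liminf_le_liminf_setLIntegral {g : ℕ → α → ℝ≥0∞}
    (hμ : μ s ≠ 0) (hμ₁ : μ s ≠ ∞) (hg : ∀ i, Measurable (g i)) :
    ∃ x ∈ s, μ s * liminf (fun i => g i x) atTop ≤ liminf (fun i => ∫⁻ a in s, g i a ∂μ) atTop := by
  obtain ⟨x, hxs, hx⟩ := exists_mem_measure_mul_le_setLIntegral hμ hμ₁
    (Measurable.liminf hg).aemeasurable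
  exact ⟨x, hxs, hx.trans (lintegral_liminf_le hg)⟩

end MeasureTheory

theorem one_dim_slice_general (r₁ r₂ : ℝ) (hr₁₂ : r₁ < r₂)
    (g : ℕ → ℝ → ℝ≥0∞) (hmeas : ∀ i, Measurable (g i)) :
    ∃ ρ ∈ Set.Icc r₁ r₂,
      ENNReal.ofReal (r₂ - r₁) * Filter.liminf (fun i => g i ρ) Filter.atTop
        ≤ 2 * Filter.liminf (fun i => ∫⁻ t in Set.Icc r₁ r₂, g i t) Filter.atTop := by
  have hvol : volume (Set.Icc r₁ r₂) = ENNReal.ofReal (r₂ - r₁) := Real.volume_Icc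
  obtain ⟨ρ, hρ, hle⟩ := exists_mem_measure_mul_liminf_le_liminf_setLIntegral
    (μ := volume) (s := Set.Icc r₁ r₂) (by simpa [hvol] using hr₁₂) (by simp [hvol]) hmeas
  refine ⟨ρ, hρ, ?_⟩
  rw [← hvol]
  exact hle.trans (le_mul_of_one_le_left zero_le one_le_two)

/-- **One-dimensional slicing claim** (core step of Lemma 3.1). For `0 ≤ r₁ < r₂` and a
sequence of measurable functions `g i : ℝ → [0, ∞]`, there exists `ρ ∈ [r₁, r₂]` with
`(r₂ - r₁) · liminf_i g_i(ρ) ≤ 2 · liminf_i ∫_{[r₁,r₂]} g_i(t) dt`. -/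
theorem one_dim_slice (r₁ r₂ : ℝ) (hr₁ : 0 ≤ r₁) (hr₁₂ : r₁ < r₂)
    (g : ℕ → ℝ → ℝ≥0∞) (hmeas : ∀ i, Measurable (g i)) :
    ∃ ρ ∈ Set.Icc r₁ r₂,
      ENNReal.ofReal (r₂ - r₁) * Filter.liminf (fun i => g i ρ) Filter.atTop
        ≤ 2 * Filter.liminf (fun i => ∫⁻ t in Set.Icc r₁ r₂, g i t) Filter.atTop :=
  one_dim_slice_general r₁ r₂ hr₁₂ g hmeas
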